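/- For α > -1, the function Z_q(z) = (|z|^{2(1+α)} - 1)/(|z|^{2(1+α)} + 1) satisfies the linearized Liouville equation Δ Z_q + (8(1+α)² |z|^{2α} / (1+|z|^{2(1+α)})²) Z_q = 0 for all z ∈ ℝ² with z ≠ 0. -/

import Mathlib

/-!
`Z_q` is radial, `Z_q(z) = g(|z|²)` with `g(s) = (s^β - 1)/(s^β + 1)` and `β = 1 + α`. Along a
coordinate line `|z + t eᵢ|² = |z|² + 2 zᵢ t + t²`, so the chain rule gives the planar Laplacian of
`g(|z|²)` as `4 s g''(s) + 4 g'(s)` at `s = |z|²`. The weight `|z|^{2α}` is `s^{β-1}`, so the claim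
becomes an ODE for `g`: indeed `4 s g'' + 4 g' = 8 β² s^{β-1} (1 - s^β) / (1 + s^β)³`.
-/

open MeasureTheory Real

/-- The Laplacian of a function on `ℝ²`, as the sum of second directional
derivatives along the standard coordinate directions. -/
noncomputable def laplacian (f : EuclideanSpace ℝ (Fin 2) → ℝ)
    (x : EuclideanSpace ℝ (Fin 2)) : ℝ :=
  ∑ i : Fin 2, iteratedDeriv 2 (fun t : ℝ => f (x + t • EuclideanSpace.single i (1 : ℝ))) 0

open Filter Topology

lemma iteratedDeriv_two_comp_quadratic {g g' : ℝ → ℝ} {s g'' : ℝ} (a : ℝ)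
    (hg : ∀ᶠ x in 𝓝 s, HasDerivAt g (g' x) x) (hg' : HasDerivAt g' g'' s) :
    iteratedDeriv 2 (fun t => g (s + 2 * a * t + t ^ 2)) 0 = 4 * a ^ 2 * g'' + 2 * g' s := by
  set q : ℝ → ℝ := fun t => s + 2 * a * t + t ^ 2
  have hq : ∀ t, HasDerivAt q (2 * a + 2 * t) t := fun t =>
    ((((hasDerivAt_id' t).const_mul (2 * a)).const_add s).add (hasDerivAt_pow 2 t)).congr_deriv
      (by simp)
  have hq0 : q 0 = s := by simp [q]
  have hderiv : deriv (fun t => g (q t)) =ᶠ[𝓝 0] fun t => g' (q t) * (2 * a + 2 * t) := by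
    have hqs : Tendsto q (𝓝 0) (𝓝 s) := hq0 ▸ (hq 0).continuousAt.tendsto
    filter_upwards [hqs.eventually hg] with t ht
    exact (ht.comp t (hq t)).deriv
  have hg'q : HasDerivAt (fun t => g' (q t)) (g'' * (2 * a + 2 * 0)) 0 :=
    (hq0 ▸ hg').comp 0 (hq 0)
  have hsecond : HasDerivAt (fun t => g' (q t) * (2 * a + 2 * t))
      (g'' * (2 * a + 2 * 0) * (2 * a + 2 * 0) + g' (q 0) * (2 * 1)) 0 :=
    hg'q.mul (((hasDerivAt_id (0 : ℝ)).const_mul 2).const_add (2 * a))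
  rw [iteratedDeriv_succ, iteratedDeriv_one, hderiv.deriv_eq, hsecond.deriv, hq0]
  ring

lemma EuclideanSpace.norm_add_smul_single_sq {ι : Type*} [Fintype ι] [DecidableEq ι]
    (z : EuclideanSpace ℝ ι) (i : ι) (t : ℝ) :
    ‖z + t • EuclideanSpace.single i (1 : ℝ)‖ ^ 2 = ‖z‖ ^ 2 + 2 * z i * t + t ^ 2 := by
  rw [norm_add_sq_real, real_inner_smul_right, EuclideanSpace.inner_single_right, norm_smul]
  simp only [ringHom_apply, one_mul, norm_eq_abs, PiLp.norm_single, norm_one, mul_one, sq_abs]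
  ring

lemma laplacian_comp_norm_sq {g g' : ℝ → ℝ} {g'' : ℝ} (z : EuclideanSpace ℝ (Fin 2))
    (hg : ∀ᶠ x in 𝓝 (‖z‖ ^ 2), HasDerivAt g (g' x) x) (hg' : HasDerivAt g' g'' (‖z‖ ^ 2)) :
    laplacian (fun w => g (‖w‖ ^ 2)) z = 4 * ‖z‖ ^ 2 * g'' + 4 * g' (‖z‖ ^ 2) := by
  have hcoord : ‖z‖ ^ 2 = z 0 ^ 2 + z 1 ^ 2 := by
    simp [EuclideanSpace.norm_sq_eq, Fin.sum_univ_two]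
  simp only [laplacian, EuclideanSpace.norm_add_smul_single_sq, Fin.sum_univ_two,
    iteratedDeriv_two_comp_quadratic _ hg hg']
  rw [hcoord]
  ring

noncomputable def kernelProfile (β s : ℝ) : ℝ := (s ^ β - 1) / (s ^ β + 1)

section kernelProfile

variable {β s : ℝ}

lemma hasDerivAt_kernelProfile (hs : 0 < s) :
    HasDerivAt (kernelProfile β) (2 * β * s ^ (β - 1) / (s ^ β + 1) ^ 2) s := by
  have hp := Real.hasDerivAt_rpow_const (x := s) (p := β) (Or.inl hs.ne')
  refine ((hp.sub_const 1).div (hp.add_const 1) (by positivity)).congr_deriv ?_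
  field_simp
  ring

lemma hasDerivAt_kernelProfile_deriv (hs : 0 < s) :
    HasDerivAt (fun x => 2 * β * x ^ (β - 1) / (x ^ β + 1) ^ 2)
      (2 * β * s ^ (β - 2) * (β - 1 - (β + 1) * s ^ β) / (s ^ β + 1) ^ 3) s := by
  have hp := Real.hasDerivAt_rpow_const (x := s) (p := β) (Or.inl hs.ne')
  have hp' := (Real.hasDerivAt_rpow_const (x := s) (p := β - 1) (Or.inl hs.ne')).const_mul (2 * β)
  have hq : HasDerivAt (fun x => (x ^ β + 1) ^ 2)
      ((2 : ℕ) * (s ^ β + 1) ^ (2 - 1) * (β * s ^ (β - 1))) s := (hp.add_const 1).pow 2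
  refine (hp'.div hq (by positivity)).congr_deriv ?_
  have hsβ : 0 < s ^ β := Real.rpow_pos_of_pos hs β
  rw [show β - 1 - 1 = β - 2 by ring, Real.rpow_sub hs, Real.rpow_sub hs, Real.rpow_one,
    Real.rpow_two]
  field_simp
  ring

lemma kernelProfile_ode (hs : 0 < s) :
    4 * s * (2 * β * s ^ (β - 2) * (β - 1 - (β + 1) * s ^ β) / (s ^ β + 1) ^ 3)
      + 4 * (2 * β * s ^ (β - 1) / (s ^ β + 1) ^ 2)
      + 8 * β ^ 2 * s ^ (β - 1) / (1 + s ^ β) ^ 2 * kernelProfile β s = 0 := by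
  have hsβ : 0 < s ^ β := Real.rpow_pos_of_pos hs β
  rw [kernelProfile, Real.rpow_sub hs, Real.rpow_sub hs, Real.rpow_one, Real.rpow_two]
  field_simp
  ring

end kernelProfile

lemma Real.rpow_two_mul {x : ℝ} (hx : 0 ≤ x) (p : ℝ) : x ^ (2 * p) = (x ^ 2) ^ p := by
  exact_mod_cast Real.rpow_natCast_mul hx 2 p

theorem stmt3_general (α : ℝ)
    (Z : EuclideanSpace ℝ (Fin 2) → ℝ)
    (hZ : ∀ z, Z z = (‖z‖ ^ (2 * (1 + α)) - 1) / (‖z‖ ^ (2 * (1 + α)) + 1)) :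
    ∀ z : EuclideanSpace ℝ (Fin 2), z ≠ 0 →
      laplacian Z z
        + (8 * (1 + α) ^ 2 * ‖z‖ ^ (2 * α) / (1 + ‖z‖ ^ (2 * (1 + α))) ^ 2) * Z z = 0 := by
  intro z hz
  have hs : 0 < ‖z‖ ^ 2 := by positivity
  have hZ_radial : Z = fun w => kernelProfile (1 + α) (‖w‖ ^ 2) :=
    funext fun w => by rw [hZ, kernelProfile, Real.rpow_two_mul (norm_nonneg w)]
  have hderiv : ∀ᶠ x in 𝓝 (‖z‖ ^ 2), HasDerivAt (kernelProfile (1 + α))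
      (2 * (1 + α) * x ^ (1 + α - 1) / (x ^ (1 + α) + 1) ^ 2) x :=
    (eventually_gt_nhds hs).mono fun x hx => hasDerivAt_kernelProfile hx
  have hweight : ‖z‖ ^ (2 * α) = (‖z‖ ^ 2) ^ (1 + α - 1) := by
    rw [add_sub_cancel_left, Real.rpow_two_mul (norm_nonneg z)]
  rw [hZ_radial, laplacian_comp_norm_sq z hderiv (hasDerivAt_kernelProfile_deriv hs), hweight,
    Real.rpow_two_mul (norm_nonneg z)]
  exact kernelProfile_ode hs

theorem stmt3 (α : ℝ) (hα : α > -1)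
    (Z : EuclideanSpace ℝ (Fin 2) → ℝ)
    (hZ : ∀ z, Z z = (‖z‖ ^ (2 * (1 + α)) - 1) / (‖z‖ ^ (2 * (1 + α)) + 1)) :
    ∀ z : EuclideanSpace ℝ (Fin 2), z ≠ 0 →
      laplacian Z z
        + (8 * (1 + α) ^ 2 * ‖z‖ ^ (2 * α) / (1 + ‖z‖ ^ (2 * (1 + α))) ^ 2) * Z z = 0 :=
  stmt3_general α Z hZ
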